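/- The group B = ⟨α, β, γ | α² central, β² central, α²β² = γ²⟩ is residually nilpotent. -/

import Mathlib

namespace Stmt14

open scoped commutatorElement

/-- Relators for `B = ⟨α, β, γ | α² central, β² central, α²β² = γ²⟩`,
with `α = of 0`, `β = of 1`, `γ = of 2`. -/
def Brels : Set (FreeGroup (Fin 3)) :=
  {⁅(FreeGroup.of (0 : Fin 3)) ^ 2, FreeGroup.of (1 : Fin 3)⁆,
   ⁅(FreeGroup.of (0 : Fin 3)) ^ 2, FreeGroup.of (2 : Fin 3)⁆,
   ⁅(FreeGroup.of (1 : Fin 3)) ^ 2, FreeGroup.of (0 : Fin 3)⁆,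
   ⁅(FreeGroup.of (1 : Fin 3)) ^ 2, FreeGroup.of (2 : Fin 3)⁆,
   (FreeGroup.of (0 : Fin 3)) ^ 2 * (FreeGroup.of (1 : Fin 3)) ^ 2 *
     ((FreeGroup.of (2 : Fin 3)) ^ 2)⁻¹}

/-- The group `B` (a presentation of `B₂(T²)`). -/
abbrev B := PresentedGroup Brels

/-- `ℤ₂ ∗ ℤ₂ ∗ ℤ₂`, presented on three generators each of order 2. -/
abbrev W3 := PresentedGroup {r : FreeGroup (Fin 3) | ∃ i : Fin 3, r = (FreeGroup.of i) ^ 2}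

def α : B := PresentedGroup.of (0 : Fin 3)
def β : B := PresentedGroup.of (1 : Fin 3)
def γ : B := PresentedGroup.of (2 : Fin 3)

/-! ### A general nilpotency criterion via a descending central filtration -/

section Nilp
variable {G : Type*} [Group G] (D : ℕ → Subgroup G)
  (hcomm : ∀ i j (u v : G), u ∈ D i → v ∈ D j → ⁅u, v⁆ ∈ D (i + j))
include hcomm

lemma lcs_le_filtration (k : ℕ) :
    (⊤ : Subgroup ↥(D 1)).lowerCentralSeries k ≤ (D (k + 1)).subgroupOf (D 1) := by
  induction k with
  | zero =>
    rw [Subgroup.subgroupOf_self]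
    exact le_top
  | succ n ih =>
    rw [Subgroup.lowerCentralSeries_succ, Subgroup.commutator_def]
    rw [Subgroup.closure_le]
    rintro x ⟨p, hp, q, -, rfl⟩
    have hp' : (p : G) ∈ D (n + 1) := ih hp
    have hq' : (q : G) ∈ D 1 := q.2
    have : ⁅(p : G), (q : G)⁆ ∈ D (n + 1 + 1) := hcomm _ _ _ _ hp' hq'
    simpa [Subgroup.mem_subgroupOf, commutatorElement_def] using this

lemma isNilpotent_of_filtration (n : ℕ) (hbot : D (n + 1) = ⊥) :
    Group.IsNilpotent ↥(D 1) := by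
  rw [nilpotent_iff_lowerCentralSeries]
  refine ⟨n, ?_⟩
  have h := lcs_le_filtration D hcomm n
  rw [hbot] at h
  refine le_bot_iff.mp (le_trans h ?_)
  intro x hx
  have h1 : (x : G) ∈ (⊥ : Subgroup G) := hx
  rw [Subgroup.mem_bot] at h1 ⊢
  exact Subtype.ext h1

end Nilp

/-! ### The matrix model detecting alternating words -/

noncomputable section Mat

variable (N : ℕ)

/-- Basis: alternating words of length ≤ N over `Fin 3`. -/
abbrev BasisT : Type := {l : List (Fin 3) // l.Chain' (· ≠ ·) ∧ l.length ≤ N}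

instance : Finite (BasisT N) := by
  have : Finite {l : List (Fin 3) // l.length ≤ N} :=
    (List.finite_length_le (Fin 3) N).to_subtype
  refine Finite.of_injective
    (fun a : BasisT N => (⟨a.1, a.2.2⟩ : {l : List (Fin 3) // l.length ≤ N})) ?_
  intro a b h
  cases a; cases b; simpa using h

instance : Fintype (BasisT N) := Fintype.ofFinite _
instance : DecidableEq (BasisT N) := fun a b => decidable_of_iff (a.1 = b.1) Subtype.ext_iff.symm

abbrev Mat : Type := Matrix (BasisT N) (BasisT N) (ZMod 2)

/-- Raising operator for letter `i`. -/
def U (i : Fin 3) : Mat N := fun a b => if a.1 = i :: b.1 then 1 else 0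

lemma U_mul_U (i : Fin 3) : U N i * U N i = 0 := by
  ext a b
  rw [Matrix.mul_apply]
  apply Finset.sum_eq_zero
  intro v _
  by_cases h1 : a.1 = i :: v.1
  · by_cases h2 : v.1 = i :: b.1
    · exfalso
      have := a.2.1
      rw [h1, h2] at this
      exact (List.isChain_cons_cons.mp this).1 rfl
    · simp [U, h2]
  · simp [U, h1]

lemma matrix_add_self (M : Mat N) : M + M = 0 := by
  ext a b
  show (M a b) + (M a b) = 0
  have : (2 : ZMod 2) = 0 := rfl
  calc M a b + M a b = 2 * M a b := by ring
  _ = 0 := by rw [this]; ring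

lemma g_mul_g (i : Fin 3) : ((1 : Mat N) + U N i) * (1 + U N i) = 1 := by
  have h := U_mul_U N i
  have h2 := matrix_add_self N (U N i)
  calc ((1 : Mat N) + U N i) * (1 + U N i)
      = 1 + ((U N i + U N i) + U N i * U N i) := by noncomm_ring
  _ = 1 := by rw [h, h2]; simp

/-- The unit `1 + Uᵢ`. -/
def g (i : Fin 3) : (Mat N)ˣ := ⟨1 + U N i, 1 + U N i, g_mul_g N i, g_mul_g N i⟩

/-- `M` raises word length by at least `j`. -/
def Rge (j : ℕ) (M : Mat N) : Prop := ∀ a b, M a b ≠ 0 → b.1.length + j ≤ a.1.length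

variable {N}

lemma Rge.mono {j j' : ℕ} {M : Mat N} (h : Rge N j M) (hj : j' ≤ j) : Rge N j' M :=
  fun a b hab => le_trans (by omega) (h a b hab)

lemma Rge.zero (j : ℕ) : Rge N j 0 := fun _ _ hab => absurd rfl hab

lemma Rge.add {i : ℕ} {M M' : Mat N} (h : Rge N i M) (h' : Rge N i M') : Rge N i (M + M') := by
  intro a b hab
  by_cases hM : M a b = 0
  · exact h' a b (by simpa [Matrix.add_apply, hM] using hab)
  · exact h a b hM

lemma Rge.neg {i : ℕ} {M : Mat N} (h : Rge N i M) : Rge N i (-M) := by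
  intro a b hab
  exact h a b (by simpa using hab)

lemma Rge.mul {i j : ℕ} {M M' : Mat N} (h : Rge N i M) (h' : Rge N j M') :
    Rge N (i + j) (M * M') := by
  intro a b hab
  rw [Matrix.mul_apply] at hab
  obtain ⟨v, _, hv⟩ := Finset.exists_ne_zero_of_sum_ne_zero hab
  have h1 : M a v ≠ 0 := fun e => hv (by simp [e])
  have h2 : M' v b ≠ 0 := fun e => hv (by simp [e])
  have := h a v h1
  have := h' v b h2
  omega

variable (N)

/-- Descending central filtration of the unit group. -/
def D (j : ℕ) : Subgroup (Mat N)ˣ where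
  carrier := {u | Rge N j ((u : Mat N) - 1) ∧ Rge N j (((u⁻¹ : (Mat N)ˣ) : Mat N) - 1)}
  one_mem' := by
    constructor <;> · simpa using Rge.zero j
  mul_mem' := by
    rintro u v ⟨hu, hu'⟩ ⟨hv, hv'⟩
    have key : ∀ x y : (Mat N)ˣ, Rge N j ((x : Mat N) - 1) → Rge N j ((y : Mat N) - 1) →
        Rge N j (((x*y : (Mat N)ˣ) : Mat N) - 1) := by
      intro x y hx hy
      have e : ((x*y : (Mat N)ˣ) : Mat N) - 1
          = ((x : Mat N) - 1) * ((y : Mat N) - 1) + (((x : Mat N) - 1) + ((y : Mat N) - 1)) := by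
        push_cast
        noncomm_ring
      rw [e]
      exact ((hx.mul hy).mono (by omega)).add (hx.add hy)
    refine ⟨key u v hu hv, ?_⟩
    have : (u * v)⁻¹ = v⁻¹ * u⁻¹ := by rw [mul_inv_rev]
    rw [this]
    exact key v⁻¹ u⁻¹ hv' hu'
  inv_mem' := by
    rintro u ⟨hu, hu'⟩
    exact ⟨hu', by simpa using hu⟩

lemma commutator_mem_D {i j : ℕ} {u v : (Mat N)ˣ} (hu : u ∈ D N i) (hv : v ∈ D N j) :
    ⁅u, v⁆ ∈ D N (i + j) := by
  have key : ∀ (i j : ℕ) (u v : (Mat N)ˣ), u ∈ D N i → v ∈ D N j →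
      Rge N (i + j) (((⁅u, v⁆ : (Mat N)ˣ) : Mat N) - 1) := by
    intro i j u v hu hv
    have hu1 := hu.1
    have hv1 := hv.1
    have hu2 := hu.2
    have hv2 := hv.2
    set a := ((u : (Mat N)ˣ) : Mat N) with ha_def
    set b := ((v : (Mat N)ˣ) : Mat N) with hb_def
    set a' := (((u⁻¹ : (Mat N)ˣ)) : Mat N) with ha'_def
    set b' := (((v⁻¹ : (Mat N)ˣ)) : Mat N) with hb'_def
    have ha : a * a' = 1 := u.mul_inv
    have hb : b * b' = 1 := v.mul_inv
    have hw : Rge N 0 (a' * b' - 1) := by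
      have e : a' * b' - 1 = (a' - 1) * (b' - 1) + ((a' - 1) + (b' - 1)) := by noncomm_ring
      rw [e]
      exact ((hu2.mul hv2).mono (by omega)).add ((hu2.mono (by omega)).add (hv2.mono (by omega)))
    have hcoe : ((⁅u, v⁆ : (Mat N)ˣ) : Mat N) = a * b * a' * b' := by
      simp [commutatorElement_def, Units.val_mul, ha_def, hb_def, ha'_def, hb'_def]
    have haux : a * (a' * b') = b' := by rw [← mul_assoc, ha, one_mul]
    have e1 : a * b * a' * b' - 1 = (a * b - b * a) * (a' * b') := by
      have h2 : b * a * (a' * b') = 1 := by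
        rw [mul_assoc b a (a' * b'), haux, hb]
      calc a * b * a' * b' - 1 = a * b * (a' * b') - b * a * (a' * b') + (b * a * (a' * b') - 1) :=
            by noncomm_ring
        _ = a * b * (a' * b') - b * a * (a' * b') := by rw [h2]; noncomm_ring
        _ = (a * b - b * a) * (a' * b') := by noncomm_ring
    have e2 : a * b - b * a = (a - 1) * (b - 1) - (b - 1) * (a - 1) := by noncomm_ring
    have hX : Rge N (i + j) (a * b - b * a) := by
      rw [e2, sub_eq_add_neg]
      exact (hu1.mul hv1).add ((hv1.mul hu1).mono (by omega) : Rge N (i+j) _).neg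
    have e3 : (a * b - b * a) * (a' * b') =
        (a * b - b * a) + (a * b - b * a) * (a' * b' - 1) := by noncomm_ring
    rw [hcoe, e1, e3]
    exact hX.add ((hX.mul hw).mono (by omega))
  refine ⟨key i j u v hu hv, ?_⟩
  rw [commutatorElement_inv]
  exact (by rw [Nat.add_comm]; exact (key j i v u hv hu))

lemma D_succ_eq_bot : D N (N + 1) = ⊥ := by
  rw [eq_bot_iff]
  rintro u ⟨hu, -⟩
  rw [Subgroup.mem_bot]
  have : ((u : Mat N) - 1) = 0 := by
    ext a b
    by_contra hab
    have h1 := hu a b (by simpa using hab)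
    have h2 := a.2.2
    omega
  have : (u : Mat N) = 1 := by
    have := congrArg (· + (1 : Mat N)) this
    simpa using this
  exact Units.ext this

lemma g_mem_D1 (i : Fin 3) : g N i ∈ D N 1 := by
  have hval : ((g N i : (Mat N)ˣ) : Mat N) - 1 = U N i := by
    show (1 + U N i) - 1 = U N i
    rw [add_sub_cancel_left]
  have hinv : (((g N i)⁻¹ : (Mat N)ˣ) : Mat N) - 1 = U N i := by
    show (1 + U N i) - 1 = U N i
    rw [add_sub_cancel_left]
  have hU : Rge N 1 (U N i) := by
    intro a b hab
    have : a.1 = i :: b.1 := by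
      by_contra h
      simp [U, h] at hab
    simp [this]
  exact ⟨by rw [hval]; exact hU, by rw [hinv]; exact hU⟩

instance : Group.IsNilpotent ↥(D N 1) :=
  isNilpotent_of_filtration (D N) (fun _ _ _ _ hu hv => commutator_mem_D N hu hv) N
    (D_succ_eq_bot N)

/-! ### Entry computations for products of the `1 + Uᵢ` -/

variable {N}

/-- `M` raises word length by at most `j`. -/
def Qle (j : ℕ) (M : Mat N) : Prop := ∀ a b, M a b ≠ 0 → a.1.length ≤ b.1.length + j

lemma Qle.one : Qle (N := N) 0 1 := by
  intro a b hab
  by_cases h : a = b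
  · simp [h]
  · simp [Matrix.one_apply_ne h] at hab

lemma Qle.mul {i j : ℕ} {M M' : Mat N} (h : Qle i M) (h' : Qle j M') :
    Qle (i + j) (M * M') := by
  intro a b hab
  rw [Matrix.mul_apply] at hab
  obtain ⟨v, _, hv⟩ := Finset.exists_ne_zero_of_sum_ne_zero hab
  have h1 : M a v ≠ 0 := fun e => hv (by simp [e])
  have h2 : M' v b ≠ 0 := fun e => hv (by simp [e])
  have := h a v h1
  have := h' v b h2
  omega

lemma Qle_one_add_U (i : Fin 3) : Qle (N := N) 1 (1 + U N i) := by
  intro a b hab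
  by_cases h : a = b
  · simp [h]
  · have : ((1 : Mat N) + U N i) a b = U N i a b := by
      simp [Matrix.add_apply, Matrix.one_apply_ne h]
    rw [this] at hab
    have : a.1 = i :: b.1 := by
      by_contra hc
      simp [U, hc] at hab
    simp [this]

variable (N)

/-- Product of the matrices `1 + Uᵢ` along a word. -/
def P (L : List (Fin 3)) : Mat N := (L.map (fun i => (1 : Mat N) + U N i)).prod

lemma P_nil : P N [] = 1 := rfl

lemma P_cons (i : Fin 3) (L : List (Fin 3)) : P N (i :: L) = (1 + U N i) * P N L := by
  simp [P]

lemma Qle_P (L : List (Fin 3)) : Qle (N := N) L.length (P N L) := by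
  induction L with
  | nil => simpa [P_nil] using (Qle.one (N := N))
  | cons i L ih =>
    rw [P_cons]
    simpa [Nat.add_comm] using (Qle_one_add_U i).mul ih

lemma P_entry (L : List (Fin 3)) (b : BasisT N) (h : (L ++ b.1).Chain' (· ≠ ·))
    (hlen : (L ++ b.1).length ≤ N) :
    P N L ⟨L ++ b.1, h, hlen⟩ b = 1 := by
  induction L with
  | nil =>
    have : (⟨[] ++ b.1, h, hlen⟩ : BasisT N) = b := Subtype.ext (by simp)
    rw [P_nil, this, Matrix.one_apply_eq]
  | cons i L ih =>
    have htail : (L ++ b.1).Chain' (· ≠ ·) := (List.isChain_cons.mp h).2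
    have hlentail : (L ++ b.1).length ≤ N := by
      have := hlen
      simp at this ⊢
      omega
    set v₀ : BasisT N := ⟨L ++ b.1, htail, hlentail⟩ with hv₀
    set a : BasisT N := ⟨(i :: L) ++ b.1, h, hlen⟩ with ha
    rw [P_cons, add_mul, one_mul, Matrix.add_apply]
    have h1 : P N L a b = 0 := by
      by_contra hne
      have := Qle_P N L a b hne
      have : ((i :: L) ++ b.1).length ≤ b.1.length + L.length := this
      simp at this
      omega
    have h2 : (U N i * P N L) a b = 1 := by
      rw [Matrix.mul_apply]
      rw [Finset.sum_eq_single v₀]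
      · have : U N i a v₀ = 1 := by simp [U, ha, hv₀]
        rw [this, one_mul]
        exact ih htail hlentail
      · intro v _ hne
        have hx : U N i a v = 0 := by
          simp only [U]
          rw [if_neg]
          intro hc
          have hc' : i :: (L ++ b.1) = i :: v.1 := hc
          have hc2 : L ++ b.1 = v.1 := by injection hc'
          exact hne (Subtype.ext hc2.symm)
        rw [hx, zero_mul]
      · intro hmem
        exact absurd (Finset.mem_univ v₀) hmem
    rw [h1, h2, zero_add]

end Mat


/-! ### The group `W3` and its residual nilpotence -/

section W3sec

/-- The relators of `W3`. -/
abbrev Srels : Set (FreeGroup (Fin 3)) :=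
  {r : FreeGroup (Fin 3) | ∃ i : Fin 3, r = (FreeGroup.of i) ^ 2}

/-- Generators of `W3`. -/
def genW (i : Fin 3) : W3 := PresentedGroup.of i

lemma genW_sq (i : Fin 3) : genW i ^ 2 = 1 := by
  have h : PresentedGroup.mk Srels ((FreeGroup.of i) ^ 2) = 1 :=
    (QuotientGroup.eq_one_iff _).mpr (Subgroup.subset_normalClosure ⟨i, rfl⟩)
  rw [map_pow] at h
  exact h

lemma genW_mul_self (i : Fin 3) : genW i * genW i = 1 := by
  have := genW_sq i
  rwa [pow_two] at this

/-- Product of generators along a word. -/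
def wp (L : List (Fin 3)) : W3 := (L.map genW).prod

lemma wp_nil : wp [] = 1 := rfl

lemma wp_cons (i : Fin 3) (L : List (Fin 3)) : wp (i :: L) = genW i * wp L := by
  simp [wp]

lemma wp_append (L₁ L₂ : List (Fin 3)) : wp (L₁ ++ L₂) = wp L₁ * wp L₂ := by
  simp [wp]

lemma wp_inv (L : List (Fin 3)) : (wp L)⁻¹ = wp L.reverse := by
  induction L with
  | nil => simp [wp_nil]
  | cons i L ih =>
    rw [wp_cons, mul_inv_rev, ih, List.reverse_cons, wp_append]
    congr 1
    rw [inv_eq_iff_mul_eq_one, wp_cons, wp_nil, mul_one]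
    exact genW_mul_self i

lemma exists_word (x : W3) : ∃ L, x = wp L := by
  let S : Subgroup W3 :=
    { carrier := {x | ∃ L, x = wp L}
      one_mem' := ⟨[], rfl⟩
      mul_mem' := by
        rintro x y ⟨L₁, rfl⟩ ⟨L₂, rfl⟩
        exact ⟨L₁ ++ L₂, (wp_append L₁ L₂).symm⟩
      inv_mem' := by
        rintro x ⟨L, rfl⟩
        exact ⟨L.reverse, wp_inv L⟩ }
  exact PresentedGroup.generated_by _ S
    (fun j => ⟨[j], by rw [wp_cons, wp_nil, mul_one]; rfl⟩) x

lemma reduce_word (L : List (Fin 3)) :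
    ∃ L', L'.Chain' (· ≠ ·) ∧ wp L' = wp L := by
  induction L with
  | nil => exact ⟨[], List.isChain_nil, rfl⟩
  | cons i L ih =>
    obtain ⟨L', hL', hwp⟩ := ih
    match L', hL', hwp with
    | [], _, hwp => exact ⟨[i], List.isChain_singleton i, by rw [wp_cons, wp_cons, hwp]⟩
    | c :: s, hL', hwp =>
      by_cases h : i = c
      · refine ⟨s, hL'.tail, ?_⟩
        rw [wp_cons, ← hwp, wp_cons, ← mul_assoc, h, genW_mul_self, one_mul]
      · exact ⟨i :: c :: s, List.isChain_cons_cons.mpr ⟨h, hL'⟩, by rw [wp_cons, hwp, wp_cons]⟩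

lemma exists_alt_word (x : W3) : ∃ L, L.Chain' (· ≠ ·) ∧ x = wp L := by
  obtain ⟨L, rfl⟩ := exists_word x
  obtain ⟨L', h1, h2⟩ := reduce_word L
  exact ⟨L', h1, h2.symm⟩

noncomputable section

variable (N : ℕ)

/-- Generator images in the unipotent group. -/
def fD (i : Fin 3) : ↥(D N 1) := ⟨g N i, g_mem_D1 N i⟩

lemma fD_rels : ∀ r ∈ Srels, FreeGroup.lift (fD N) r = 1 := by
  rintro r ⟨i, rfl⟩
  rw [map_pow, FreeGroup.lift_apply_of, pow_two]
  apply Subtype.ext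
  show g N i * g N i = 1
  exact Units.ext (g_mul_g N i)

/-- The homomorphism from `W3` to the unipotent group. -/
def φm : W3 →* ↥(D N 1) := PresentedGroup.toGroup (fD_rels N)

lemma φm_wp (L : List (Fin 3)) :
    (((φm N (wp L) : ↥(D N 1)) : (Mat N)ˣ) : Mat N) = P N L := by
  induction L with
  | nil => rw [wp_nil, map_one, P_nil]; rfl
  | cons i L ih =>
    rw [wp_cons, map_mul, P_cons]
    have h1 : φm N (genW i) = fD N i := PresentedGroup.toGroup.of (fD_rels N)
    rw [h1]
    show ((1 : Mat N) + U N i) * _ = _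
    rw [ih]

end

lemma W3_sep (w : W3) (hw : w ≠ 1) :
    ∃ (H : Type) (_ : Group H) (ψ : W3 →* H),
      Function.Surjective ψ ∧ Group.IsNilpotent H ∧ ψ w ≠ 1 := by
  obtain ⟨L, hL, rfl⟩ := exists_alt_word w
  have hLne : L ≠ [] := fun h => hw (by rw [h, wp_nil])
  set N := L.length with hN
  refine ⟨↥(φm N).range, inferInstance, (φm N).rangeRestrict,
    MonoidHom.rangeRestrict_surjective _, inferInstance, ?_⟩
  intro h1
  have hφ : φm N (wp L) = 1 := by
    have h2 := congrArg ((↑) : ↥(φm N).range → ↥(D N 1)) h1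
    simpa using h2
  have hP : P N L = 1 := by
    rw [← φm_wp, hφ]
    rfl
  have hb0 : ([] : List (Fin 3)).Chain' (· ≠ ·) ∧ ([] : List (Fin 3)).length ≤ N := by
    constructor
    · exact List.isChain_nil
    · simp
  set b : BasisT N := ⟨[], hb0⟩ with hbdef
  have hch : (L ++ b.1).Chain' (· ≠ ·) := by
    show (L ++ ([] : List (Fin 3))).Chain' (· ≠ ·)
    simpa using hL
  have hlen : (L ++ b.1).length ≤ N := by
    show (L ++ ([] : List (Fin 3))).length ≤ N
    simp [hN]
  have h2 := P_entry N L b hch hlen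
  rw [hP] at h2
  have hne : (⟨L ++ b.1, hch, hlen⟩ : BasisT N) ≠ b := by
    intro hc
    apply hLne
    have h3 : L ++ b.1 = b.1 := congrArg Subtype.val hc
    simpa using h3
  rw [Matrix.one_apply_ne hne] at h2
  exact one_ne_zero h2.symm

end W3sec

/-! ### The homomorphisms out of `B` -/

section Bsec

lemma pi_rels : ∀ r ∈ Brels, FreeGroup.lift (fun i => (PresentedGroup.of i : W3)) r = 1 := by
  have hsq : ∀ i : Fin 3, (PresentedGroup.of i : W3) ^ 2 = 1 := genW_sq
  intro r hr
  simp only [Brels, Set.mem_insert_iff, Set.mem_singleton_iff] at hr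
  rcases hr with rfl | rfl | rfl | rfl | rfl <;>
    simp [commutatorElement_def, map_mul, map_inv, map_pow, FreeGroup.lift_apply_of, hsq]

/-- The quotient map `B → W3`. -/
def piW : B →* W3 := PresentedGroup.toGroup pi_rels

lemma piW_of (i : Fin 3) : piW (PresentedGroup.of i) = PresentedGroup.of i :=
  PresentedGroup.toGroup.of pi_rels

lemma piW_surj : Function.Surjective piW := by
  intro w
  exact PresentedGroup.generated_by _ piW.range
    (fun j => ⟨PresentedGroup.of j, piW_of j⟩) w

lemma brel_one {r : FreeGroup (Fin 3)} (hr : r ∈ Brels) : PresentedGroup.mk Brels r = 1 :=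
  (QuotientGroup.eq_one_iff _).mpr (Subgroup.subset_normalClosure hr)

lemma mk_of_pow (i : Fin 3) :
    PresentedGroup.mk Brels ((FreeGroup.of i) ^ 2) = (PresentedGroup.of i : B) ^ 2 := by
  rw [map_pow]; rfl

lemma commute_alpha2_beta : Commute (α ^ 2) β := by
  have h := brel_one (show ⁅(FreeGroup.of (0 : Fin 3)) ^ 2, FreeGroup.of (1 : Fin 3)⁆ ∈ Brels by
    simp [Brels])
  rw [map_commutatorElement, mk_of_pow] at h
  exact commutatorElement_eq_one_iff_commute.mp h

lemma commute_alpha2_gamma : Commute (α ^ 2) γ := by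
  have h := brel_one (show ⁅(FreeGroup.of (0 : Fin 3)) ^ 2, FreeGroup.of (2 : Fin 3)⁆ ∈ Brels by
    simp [Brels])
  rw [map_commutatorElement, mk_of_pow] at h
  exact commutatorElement_eq_one_iff_commute.mp h

lemma commute_beta2_alpha : Commute (β ^ 2) α := by
  have h := brel_one (show ⁅(FreeGroup.of (1 : Fin 3)) ^ 2, FreeGroup.of (0 : Fin 3)⁆ ∈ Brels by
    simp [Brels])
  rw [map_commutatorElement, mk_of_pow] at h
  exact commutatorElement_eq_one_iff_commute.mp h

lemma commute_beta2_gamma : Commute (β ^ 2) γ := by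
  have h := brel_one (show ⁅(FreeGroup.of (1 : Fin 3)) ^ 2, FreeGroup.of (2 : Fin 3)⁆ ∈ Brels by
    simp [Brels])
  rw [map_commutatorElement, mk_of_pow] at h
  exact commutatorElement_eq_one_iff_commute.mp h

lemma gamma_sq : γ ^ 2 = α ^ 2 * β ^ 2 := by
  have h := brel_one (show (FreeGroup.of (0 : Fin 3)) ^ 2 * (FreeGroup.of (1 : Fin 3)) ^ 2 *
      ((FreeGroup.of (2 : Fin 3)) ^ 2)⁻¹ ∈ Brels by simp [Brels])
  rw [map_mul, map_mul, map_inv, mk_of_pow, mk_of_pow, mk_of_pow] at h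
  have := mul_inv_eq_one.mp h
  exact this.symm

lemma alpha2_central (y : B) : Commute (α ^ 2) y := by
  have hy : y ∈ Subgroup.centralizer {α ^ 2} := by
    refine PresentedGroup.generated_by _ (Subgroup.centralizer {α ^ 2}) ?_ y
    intro j
    rw [Subgroup.mem_centralizer_iff]
    rintro s rfl
    fin_cases j
    · exact ((Commute.refl α).pow_left 2).eq
    · exact commute_alpha2_beta.eq
    · exact commute_alpha2_gamma.eq
  exact Subgroup.mem_centralizer_iff.mp hy (α ^ 2) rfl

lemma beta2_central (y : B) : Commute (β ^ 2) y := by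
  have hy : y ∈ Subgroup.centralizer {β ^ 2} := by
    refine PresentedGroup.generated_by _ (Subgroup.centralizer {β ^ 2}) ?_ y
    intro j
    rw [Subgroup.mem_centralizer_iff]
    rintro s rfl
    fin_cases j
    · exact commute_beta2_alpha.eq
    · exact ((Commute.refl β).pow_left 2).eq
    · exact commute_beta2_gamma.eq
  exact Subgroup.mem_centralizer_iff.mp hy (β ^ 2) rfl

/-- The central subgroup `⟨α², β²⟩`. -/
def K : Subgroup B := Subgroup.closure {α ^ 2, β ^ 2}

lemma K_le_center : K ≤ Subgroup.center B := by
  rw [K, Subgroup.closure_le]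
  rintro u (rfl | rfl) <;>
    · rw [SetLike.mem_coe, Subgroup.mem_center_iff]
      intro g
      first
        | exact (alpha2_central g).eq.symm
        | exact (beta2_central g).eq.symm

instance K_normal : K.Normal := by
  constructor
  intro n hn gg
  have h := Subgroup.mem_center_iff.mp (K_le_center hn) gg
  have : gg * n * gg⁻¹ = n := by rw [h, mul_assoc, mul_inv_cancel, mul_one]
  rw [this]
  exact hn

lemma mem_K_of_ker (x : B) (hx : piW x = 1) : x ∈ K := by
  obtain ⟨r, rfl⟩ := PresentedGroup.mk_surjective Brels x
  have hcomp : piW.comp (PresentedGroup.mk Brels) = PresentedGroup.mk Srels := by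
    ext i
    exact piW_of i
  have h1 : PresentedGroup.mk Srels r = 1 := by
    rw [← hcomp]
    exact hx
  have hr : r ∈ Subgroup.normalClosure Srels := (QuotientGroup.eq_one_iff r).mp h1
  have hx' : PresentedGroup.mk Brels r ∈
      (Subgroup.normalClosure Srels).map (PresentedGroup.mk Brels) := ⟨r, hr, rfl⟩
  rw [Subgroup.map_normalClosure _ _ (PresentedGroup.mk_surjective Brels)] at hx'
  refine Subgroup.normalClosure_le_normal ?_ hx'
  rintro s ⟨r', ⟨i, rfl⟩, rfl⟩
  rw [SetLike.mem_coe, mk_of_pow]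
  fin_cases i
  · exact Subgroup.subset_closure (Set.mem_insert _ _)
  · exact Subgroup.subset_closure (Set.mem_insert_of_mem _ rfl)
  · show (γ : B) ^ 2 ∈ K
    rw [gamma_sq]
    exact K.mul_mem (Subgroup.subset_closure (Set.mem_insert _ _))
      (Subgroup.subset_closure (Set.mem_insert_of_mem _ rfl))

lemma K_struct (x : B) (hx : x ∈ K) : ∃ m n : ℤ, x = (α ^ 2) ^ m * (β ^ 2) ^ n := by
  refine Subgroup.closure_induction ?_ ?_ ?_ ?_ hx
  · rintro u (rfl | rfl)
    · exact ⟨1, 0, by simp⟩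
    · exact ⟨0, 1, by simp⟩
  · exact ⟨0, 0, by simp⟩
  · rintro x y hxm hym ⟨m1, n1, rfl⟩ ⟨m2, n2, rfl⟩
    refine ⟨m1 + m2, n1 + n2, ?_⟩
    have hc : Commute ((β ^ 2) ^ n1) ((α ^ 2) ^ m2) :=
      ((beta2_central (α ^ 2)).zpow_left n1).zpow_right m2
    rw [zpow_add, zpow_add]
    calc (α ^ 2) ^ m1 * (β ^ 2) ^ n1 * ((α ^ 2) ^ m2 * (β ^ 2) ^ n2)
        = (α ^ 2) ^ m1 * ((β ^ 2) ^ n1 * (α ^ 2) ^ m2) * (β ^ 2) ^ n2 := by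
          rw [mul_assoc, mul_assoc, mul_assoc]
      _ = (α ^ 2) ^ m1 * ((α ^ 2) ^ m2 * (β ^ 2) ^ n1) * (β ^ 2) ^ n2 := by rw [hc.eq]
      _ = (α ^ 2) ^ m1 * (α ^ 2) ^ m2 * ((β ^ 2) ^ n1 * (β ^ 2) ^ n2) := by
          rw [mul_assoc, mul_assoc, mul_assoc]
  · rintro x hxm ⟨m, n, rfl⟩
    refine ⟨-m, -n, ?_⟩
    have hc : Commute ((α ^ 2) ^ (-m : ℤ)) ((β ^ 2) ^ (-n : ℤ)) :=
      ((alpha2_central (β ^ 2)).zpow_left (-m)).zpow_right (-n)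
    rw [mul_inv_rev, ← zpow_neg, ← zpow_neg, hc.eq]

/-- Generator images for the abelianization map. -/
def epsf : Fin 3 → Multiplicative ℤ × Multiplicative ℤ :=
  ![(Multiplicative.ofAdd 1, 1), (1, Multiplicative.ofAdd 1),
    (Multiplicative.ofAdd 1, Multiplicative.ofAdd 1)]

lemma eps_rels : ∀ r ∈ Brels, FreeGroup.lift epsf r = 1 := by
  intro r hr
  simp only [Brels, Set.mem_insert_iff, Set.mem_singleton_iff] at hr
  have hcomm : ∀ x y : FreeGroup (Fin 3), FreeGroup.lift epsf ⁅x, y⁆ = 1 := by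
    intro x y
    rw [map_commutatorElement]
    exact commutatorElement_eq_one_iff_commute.mpr (Commute.all _ _)
  rcases hr with rfl | rfl | rfl | rfl | rfl
  · exact hcomm _ _
  · exact hcomm _ _
  · exact hcomm _ _
  · exact hcomm _ _
  · rw [map_mul, map_mul, map_inv, map_pow, map_pow, map_pow, FreeGroup.lift_apply_of,
      FreeGroup.lift_apply_of, FreeGroup.lift_apply_of]
    have h2 : epsf 2 = epsf 0 * epsf 1 := by
      simp [epsf]
    rw [h2, mul_pow, mul_inv_cancel]

/-- The abelianization-type map `B → ℤ × ℤ`. -/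
def eps : B →* Multiplicative ℤ × Multiplicative ℤ := PresentedGroup.toGroup eps_rels

lemma eps_alpha : eps α = (Multiplicative.ofAdd 1, 1) := PresentedGroup.toGroup.of eps_rels
lemma eps_beta : eps β = (1, Multiplicative.ofAdd 1) := PresentedGroup.toGroup.of eps_rels

lemma eps_surj : Function.Surjective eps := by
  rintro ⟨u, v⟩
  refine ⟨α ^ (u.toAdd) * β ^ (v.toAdd), ?_⟩
  rw [map_mul, map_zpow, map_zpow, eps_alpha, eps_beta]
  apply Prod.ext <;> simp [← ofAdd_zsmul]

lemma eps_pow_fst (m : ℤ) : (eps ((α ^ 2) ^ m)).1 = Multiplicative.ofAdd (2 * m) := by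
  rw [map_zpow, map_pow, eps_alpha]
  simp [← ofAdd_nsmul, ← ofAdd_zsmul, two_mul]

lemma eps_pow_snd (n : ℤ) : (eps ((β ^ 2) ^ n)).2 = Multiplicative.ofAdd (2 * n) := by
  rw [map_zpow, map_pow, eps_beta]
  simp [← ofAdd_nsmul, ← ofAdd_zsmul, two_mul]

end Bsec

/-- The group `B ≅ B₂(T²)` is residually nilpotent. -/
theorem stmt_14 :
    ∀ x : B, x ≠ 1 → ∃ (H : Type) (_ : Group H) (φ : B →* H),
      Function.Surjective φ ∧ Group.IsNilpotent H ∧ φ x ≠ 1 := by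
  intro x hx
  by_cases hpi : piW x = 1
  · obtain ⟨m, n, hmn⟩ := K_struct x (mem_K_of_ker x hpi)
    refine ⟨Multiplicative ℤ × Multiplicative ℤ, inferInstance, eps, eps_surj, inferInstance, ?_⟩
    intro h1
    have hm : (eps x).1 = Multiplicative.ofAdd (2 * m) := by
      rw [hmn, map_mul, Prod.fst_mul, eps_pow_fst]
      have h3 : (eps ((β ^ 2) ^ n)).1 = 1 := by
        rw [map_zpow, map_pow, eps_beta]
        simp
      rw [h3, mul_one]
    have hn' : (eps x).2 = Multiplicative.ofAdd (2 * n) := by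
      rw [hmn, map_mul, Prod.snd_mul, eps_pow_snd]
      have h3 : (eps ((α ^ 2) ^ m)).2 = 1 := by
        rw [map_zpow, map_pow, eps_alpha]
        simp
      rw [h3, one_mul]
    rw [h1] at hm hn'
    have hm0 : m = 0 := by
      have h5 : (1 : Multiplicative ℤ) = Multiplicative.ofAdd (2 * m) := hm
      have h4 : (0 : ℤ) = 2 * m := by simpa using congrArg Multiplicative.toAdd h5
      omega
    have hn0 : n = 0 := by
      have h5 : (1 : Multiplicative ℤ) = Multiplicative.ofAdd (2 * n) := hn'
      have h4 : (0 : ℤ) = 2 * n := by simpa using congrArg Multiplicative.toAdd h5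
      omega
    apply hx
    rw [hmn, hm0, hn0]
    simp
  · obtain ⟨H, inst, ψ, hs, hn, hne⟩ := W3_sep (piW x) hpi
    exact ⟨H, inst, ψ.comp piW, hs.comp piW_surj, hn, hne⟩

end Stmt14
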